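/- Suboptimality in regularized value implies policy closeness on visited states: under the main theorem's hypotheses, if (1−γ)·E_{s∼ρ}[V_Ω^⋆(s) − V_Ω^π(s)] ≤ ε, then E_{s∼μ^π}[D_Ω(π(s,·), π*_Ω(s,·))] ≤ ε; in particular, since D_Ω ≥ 0 by convexity of Ω and μ^π(s) > 0 whenever ρ(s) > 0, suboptimality 0 forces π(s,·) = π*_Ω(s,·) on all states with μ^π(s) > 0 (using strict convexity of Ω). -/

import Mathlib

/-!
Let `gap s` be what `π(s)` loses against its maximizer `π⋆(s)` in the greedy objective
`p ↦ ⟨p, Q⋆(s)⟩ − Ω p`. The first-order optimality condition at `π⋆(s)` bounds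
`D_Ω(π(s), π⋆(s))` by `gap s`. Subtracting the two Bellman equations gives
`V⋆ − V^π = gap + γ P^π (V⋆ − V^π)`, and pairing this with the occupancy equation
`μ = (1 − γ) ρ + γ (P^π)ᵀ μ` yields the performance-difference identity
`⟨μ, gap⟩ = (1 − γ) ⟨ρ, V⋆ − V^π⟩`; since `μ ≥ 0` this proves the bound. If the suboptimality
vanishes, then `gap s = 0` wherever `μ s > 0`, so `π(s)` is a second maximizer of the strictly
concave greedy objective.
-/

open Finset

section Bregman

variable {E : Type*} [NormedAddCommGroup E] [NormedSpace ℝ E]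

noncomputable def bregmanDiv (Ω : E → ℝ) (p x : E) : ℝ :=
  Ω p - Ω x - fderiv ℝ Ω x (p - x)

variable {s : Set E} {Ω : E → ℝ} {ℓ : E →L[ℝ] ℝ} {x p : E}

theorem IsMaxOn.bregmanDiv_le (hmax : IsMaxOn (fun y => ℓ y - Ω y) s x) (hs : Convex ℝ s)
    (hΩ : DifferentiableAt ℝ Ω x) (hx : x ∈ s) (hp : p ∈ s) :
    bregmanDiv Ω p x ≤ (ℓ x - Ω x) - (ℓ p - Ω p) := by
  have hderiv : (ℓ - fderiv ℝ Ω x) (p - x) ≤ 0 :=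
    hmax.localize.hasFDerivWithinAt_nonpos (ℓ.hasFDerivAt.sub hΩ.hasFDerivAt).hasFDerivWithinAt
      (sub_mem_posTangentConeAt_of_segment_subset (hs.segment_subset hx hp))
  rw [sub_apply, map_sub] at hderiv
  unfold bregmanDiv
  linarith

theorem StrictConvexOn.eq_of_isMaxOn_sub (hΩ : StrictConvexOn ℝ s Ω)
    (hp : IsMaxOn (fun y => ℓ y - Ω y) s p) (hx : IsMaxOn (fun y => ℓ y - Ω y) s x)
    (hps : p ∈ s) (hxs : x ∈ s) : p = x :=
  ((ℓ.toLinearMap.concaveOn hΩ.1).sub_strictConvexOn hΩ).eq_of_isMaxOn hp hx hps hxs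

end Bregman

noncomputable def dotRightCLM {A : Type*} [Fintype A] (q : A → ℝ) : (A → ℝ) →L[ℝ] ℝ :=
  LinearMap.toContinuousLinearMap ((dotProductBilin ℝ ℝ).flip q)

@[simp]
theorem dotRightCLM_apply {A : Type*} [Fintype A] (q p : A → ℝ) :
    dotRightCLM q p = ∑ a, p a * q a := rfl

section Occupancy

variable {S : Type*} [Fintype S]

def IsDiscountedOccupancy (M : S → S → ℝ) (ρ : S → ℝ) (γ : ℝ) (μ : S → ℝ) : Prop :=
  ∀ s', μ s' = (1 - γ) * ρ s' + γ * ∑ s, M s s' * μ s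

variable {M : S → S → ℝ} {ρ μ : S → ℝ} {γ : ℝ}

theorem IsDiscountedOccupancy.nonneg (hμ : IsDiscountedOccupancy M ρ γ μ)
    (hM0 : ∀ s s', 0 ≤ M s s') (hM1 : ∀ s, ∑ s', M s s' ≤ 1) (hρ : ∀ s, 0 ≤ ρ s)
    (hγ0 : 0 ≤ γ) (hγ1 : γ < 1) (s : S) : 0 ≤ μ s := by
  -- the negative part `N` of `μ` satisfies `∑ N ≤ γ ∑ N`
  set N : S → ℝ := fun s => max (-μ s) 0
  have hN0 : ∀ s, 0 ≤ N s := fun s => le_max_right _ _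
  have hNμ : ∀ s, -μ s ≤ N s := fun s => le_max_left _ _
  have hN : ∀ s', N s' ≤ γ * ∑ s, M s s' * N s := by
    intro s'
    have hMN : ∑ s, M s s' * -μ s ≤ ∑ s, M s s' * N s :=
      sum_le_sum fun s _ => mul_le_mul_of_nonneg_left (hNμ s) (hM0 s s')
    simp only [mul_neg, sum_neg_distrib] at hMN
    have hγMN := mul_le_mul_of_nonneg_left hMN hγ0
    have hρ' : 0 ≤ (1 - γ) * ρ s' := mul_nonneg (by linarith) (hρ s')
    refine max_le ?_ (mul_nonneg hγ0 (sum_nonneg fun s _ => mul_nonneg (hM0 s s') (hN0 s)))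
    rw [hμ s']
    linarith
  have hsum : ∑ s', N s' ≤ γ * ∑ s, N s :=
    calc ∑ s', N s' ≤ γ * ∑ s', ∑ s, M s s' * N s := by
          rw [mul_sum]; exact sum_le_sum fun s' _ => hN s'
      _ = γ * ∑ s, (∑ s', M s s') * N s := by rw [sum_comm]; simp_rw [sum_mul]
      _ ≤ γ * ∑ s, N s := by
          gcongr with s
          exact mul_le_of_le_one_left (hN0 s) (hM1 s)
  have hsum0 : ∑ s, N s = 0 := by
    have := sum_nonneg fun s (_ : s ∈ univ) => hN0 s
    nlinarith
  have hNs : N s = 0 := (sum_eq_zero_iff_of_nonneg fun s _ => hN0 s).1 hsum0 s (mem_univ s)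
  linarith [hNμ s]

theorem IsDiscountedOccupancy.sum_mul_eq (hμ : IsDiscountedOccupancy M ρ γ μ) {f g : S → ℝ}
    (hf : ∀ s, f s = g s + γ * ∑ s', M s s' * f s') :
    ∑ s, μ s * g s = (1 - γ) * ∑ s, ρ s * f s := by
  have hswap : ∑ s, μ s * (γ * ∑ s', M s s' * f s') = ∑ s', (γ * ∑ s, M s s' * μ s) * f s' := by
    simp_rw [mul_sum, sum_mul]
    rw [sum_comm]
    exact sum_congr rfl fun _ _ => sum_congr rfl fun _ _ => by ring
  calc ∑ s, μ s * g s = ∑ s, μ s * f s - ∑ s, μ s * (γ * ∑ s', M s s' * f s') := by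
        rw [← sum_sub_distrib]
        exact sum_congr rfl fun s _ => by linear_combination -(μ s) * hf s
    _ = ∑ s, μ s * f s - ∑ s', (μ s' - (1 - γ) * ρ s') * f s' := by
        rw [hswap]
        exact congrArg _ (sum_congr rfl fun s' _ => by linear_combination -f s' * hμ s')
    _ = (1 - γ) * ∑ s, ρ s * f s := by
        rw [mul_sum, ← sum_sub_distrib]
        exact sum_congr rfl fun s _ => by ring

end Occupancy

section MDP

variable {S A : Type*} [Fintype A] (P : S → A → S → ℝ) (π : S → A → ℝ)

def policyKernel (s s' : S) : ℝ := ∑ a, P s a s' * π s a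

variable {P π}

theorem policyKernel_nonneg (hP0 : ∀ s a s', 0 ≤ P s a s') (hπ : ∀ s, π s ∈ stdSimplex ℝ A)
    (s s' : S) : 0 ≤ policyKernel P π s s' :=
  sum_nonneg fun a _ => mul_nonneg (hP0 s a s') ((hπ s).1 a)

theorem sum_policyKernel [Fintype S] (hP1 : ∀ s a, ∑ s', P s a s' = 1)
    (hπ : ∀ s, π s ∈ stdSimplex ℝ A) (s : S) : ∑ s', policyKernel P π s s' = 1 := by
  simp only [policyKernel]
  rw [sum_comm]
  simp_rw [← sum_mul, hP1, one_mul]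
  exact (hπ s).2

theorem sum_mul_sub_sum_mul_eq_policyKernel [Fintype S] {r : S → A → ℝ} {γ : ℝ}
    {Q Q' : S → A → ℝ} {V V' : S → ℝ} (hQ : ∀ s a, Q s a = r s a + γ * ∑ s', P s a s' * V s')
    (hQ' : ∀ s a, Q' s a = r s a + γ * ∑ s', P s a s' * V' s') (s : S) :
    ∑ a, π s a * Q s a - ∑ a, π s a * Q' s a
      = γ * ∑ s', policyKernel P π s s' * (V s' - V' s') := by
  have hrow : ∀ a, π s a * Q s a - π s a * Q' s a
      = γ * π s a * ∑ s', P s a s' * (V s' - V' s') := fun a => by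
    simp only [hQ, hQ', mul_sub, sum_sub_distrib]
    ring
  simp only [← sum_sub_distrib, hrow, policyKernel, mul_sum, sum_mul]
  rw [sum_comm]
  exact sum_congr rfl fun _ _ => sum_congr rfl fun _ _ => by ring

end MDP

/-- Suboptimality in regularized value implies policy closeness on visited states:
if `(1−γ)·E_{s∼ρ}[V_Ω^⋆ − V_Ω^π] ≤ ε`, then `E_{s∼μ^π}[D_Ω(π(s,·), π⋆(s,·))] ≤ ε`;
and if the suboptimality is `0` then `π(s,·) = π⋆(s,·)` on all states with `μ^π(s) > 0`. -/
theorem suboptimality_implies_policy_closeness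
    {S A : Type*} [Fintype S] [Fintype A]
    (P : S → A → S → ℝ) (hP0 : ∀ s a s', 0 ≤ P s a s') (hP1 : ∀ s a, ∑ s', P s a s' = 1)
    (r : S → A → ℝ) (ρ : S → ℝ) (hρ : ρ ∈ stdSimplex ℝ S)
    (γ : ℝ) (hγ0 : 0 ≤ γ) (hγ1 : γ < 1)
    (Ω : (A → ℝ) → ℝ) (hΩdiff : ContDiff ℝ 1 Ω)
    (hΩconv : StrictConvexOn ℝ (stdSimplex ℝ A) Ω)
    -- optimal regularized value functions and optimal policy
    (Qstar : S → A → ℝ) (Vstar : S → ℝ) (πstar : S → A → ℝ)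
    (hπstar : ∀ s, πstar s ∈ stdSimplex ℝ A)
    (hQstar : ∀ s a, Qstar s a = r s a + γ * ∑ s', P s a s' * Vstar s')
    (hVstar : ∀ s, Vstar s = ∑ a, πstar s a * Qstar s a - Ω (πstar s))
    (hmax : ∀ s, ∀ p ∈ stdSimplex ℝ A,
      ∑ a, p a * Qstar s a - Ω p ≤ ∑ a, πstar s a * Qstar s a - Ω (πstar s))
    -- an arbitrary policy `π` with its regularized value functions
    (π : S → A → ℝ) (hπ : ∀ s, π s ∈ stdSimplex ℝ A)
    (Qπ : S → A → ℝ) (Vπ : S → ℝ)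
    (hQπ : ∀ s a, Qπ s a = r s a + γ * ∑ s', P s a s' * Vπ s')
    (hVπ : ∀ s, Vπ s = ∑ a, π s a * Qπ s a - Ω (π s))
    -- discounted stationary distribution of `π`
    (μ : S → ℝ)
    (hμ : ∀ s', μ s' = (1 - γ) * ρ s' + γ * ∑ s, (∑ a, P s a s' * π s a) * μ s)
    (ε : ℝ)
    (hsub : (1 - γ) * ∑ s, ρ s * (Vstar s - Vπ s) ≤ ε) :
    (∑ s, μ s * (Ω (π s) - Ω (πstar s) - fderiv ℝ Ω (πstar s) (π s - πstar s)) ≤ ε) ∧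
    ((1 - γ) * ∑ s, ρ s * (Vstar s - Vπ s) = 0 → ∀ s, 0 < μ s → π s = πstar s) := by
  have hgreedy : ∀ s, IsMaxOn (fun p => dotRightCLM (Qstar s) p - Ω p) (stdSimplex ℝ A) (πstar s) :=
    fun s => isMaxOn_iff.2 (hmax s)
  set gap : S → ℝ := fun s =>
    (∑ a, πstar s a * Qstar s a - Ω (πstar s)) - (∑ a, π s a * Qstar s a - Ω (π s))
  have hgap0 : ∀ s, 0 ≤ gap s := fun s => sub_nonneg.2 (hmax s (π s) (hπ s))
  have hocc : IsDiscountedOccupancy (policyKernel P π) ρ γ μ := hμ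
  have hμ0 : ∀ s, 0 ≤ μ s := hocc.nonneg (policyKernel_nonneg hP0 hπ)
    (fun s => (sum_policyKernel hP1 hπ s).le) hρ.1 hγ0 hγ1
  have hperf : ∑ s, μ s * gap s = (1 - γ) * ∑ s, ρ s * (Vstar s - Vπ s) :=
    hocc.sum_mul_eq fun s => by
      have hQdiff := sum_mul_sub_sum_mul_eq_policyKernel (π := π) hQstar hQπ s
      rw [hVstar s, hVπ s]
      linarith
  refine ⟨?_, fun hzero s hs => ?_⟩
  · calc ∑ s, μ s * bregmanDiv Ω (π s) (πstar s) ≤ ∑ s, μ s * gap s := by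
          refine sum_le_sum fun s _ => mul_le_mul_of_nonneg_left ?_ (hμ0 s)
          exact (hgreedy s).bregmanDiv_le (convex_stdSimplex ℝ A)
            (hΩdiff.differentiable one_ne_zero _) (hπstar s) (hπ s)
      _ ≤ ε := hperf ▸ hsub
  · have hgap : gap s = 0 := by
      have hterm := (sum_eq_zero_iff_of_nonneg fun s _ => mul_nonneg (hμ0 s) (hgap0 s)).1
        (hperf.trans hzero) s (mem_univ s)
      exact (mul_eq_zero.1 hterm).resolve_left hs.ne'
    refine hΩconv.eq_of_isMaxOn_sub (isMaxOn_iff.2 fun p hp => ?_) (hgreedy s) (hπ s) (hπstar s)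
    have hp_le := hmax s p hp
    simp only [dotRightCLM_apply]
    linarith
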